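/- arXiv:math/0311526 — 2 statements merged into one kernel-verified Lean document; each statement's English description precedes it below -/
import Mathlib

section
/- Let G = SL(2,ℝ) (the special linear group of 2×2 real matrices of determinant 1) with a Haar measure μ, and let Γ be a discrete subgroup of G admitting a fundamental domain of finite Haar measure for the action of Γ on G by right multiplication. Fix t ∈ ℝ. Suppose f : G → ℂ is continuous and satisfies: (i) for all a ∈ ℝ with a ≠ 0, all b ∈ ℝ, and all x ∈ G, f([[a, b],[0, a⁻¹]] * x) = |a|^(1+it) · f(x); and (ii) f(x * γ) = f(x) for all x ∈ G and γ ∈ Γ. Then f = 0. -/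
open MeasureTheory
open scoped NNReal ENNReal

/-- `G = SL(2,ℝ)`. -/
abbrev SL2 : Type := Matrix.SpecialLinearGroup (Fin 2) ℝ

/-- The natural topology on `SL(2,ℝ)`, induced from the space of `2 × 2` real matrices. -/
noncomputable instance : TopologicalSpace SL2 :=
  TopologicalSpace.induced (fun g : SL2 => (g : Matrix (Fin 2) (Fin 2) ℝ)) inferInstance

/-- The Borel σ-algebra on `SL(2,ℝ)`. -/
noncomputable instance : MeasurableSpace SL2 := borel _

/-- The upper triangular matrix `[[a, b], [0, a⁻¹]]` as an element of `SL(2,ℝ)`, for `a ≠ 0`. -/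
noncomputable def upperTriangular (a b : ℝ) (ha : a ≠ 0) : SL2 :=
  ⟨!![a, b; 0, a⁻¹], by simp [Matrix.det_fin_two_of, mul_inv_cancel₀ ha]⟩

namespace PSIV

instance : SecondCountableTopology (Matrix (Fin 2) (Fin 2) ℝ) :=
  inferInstanceAs (SecondCountableTopology (Fin 2 → Fin 2 → ℝ))

instance : LocallyCompactSpace (Matrix (Fin 2) (Fin 2) ℝ) :=
  inferInstanceAs (LocallyCompactSpace (Fin 2 → Fin 2 → ℝ))

lemma sl2_inducing : Topology.IsInducing (fun g : SL2 => (g : Matrix (Fin 2) (Fin 2) ℝ)) := ⟨rfl⟩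

lemma sl2_embedding : Topology.IsEmbedding (fun g : SL2 => (g : Matrix (Fin 2) (Fin 2) ℝ)) :=
  ⟨sl2_inducing, Subtype.coe_injective⟩

lemma sl2_coe_continuous : Continuous (fun g : SL2 => (g : Matrix (Fin 2) (Fin 2) ℝ)) :=
  sl2_inducing.continuous

instance : IsTopologicalGroup SL2 where
  continuous_mul := by
    rw [sl2_inducing.continuous_iff]
    exact ((sl2_coe_continuous.comp continuous_fst).matrix_mul
      (sl2_coe_continuous.comp continuous_snd))
  continuous_inv := by
    rw [sl2_inducing.continuous_iff]
    have h : ((fun g : SL2 => (g : Matrix (Fin 2) (Fin 2) ℝ)) ∘ fun g : SL2 => g⁻¹)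
        = fun g : SL2 => (g : Matrix (Fin 2) (Fin 2) ℝ).adjugate := by
      funext g; exact Matrix.SpecialLinearGroup.coe_inv g
    rw [h]; exact sl2_coe_continuous.matrix_adjugate

instance : T2Space SL2 := sl2_embedding.t2Space
instance : SecondCountableTopology SL2 := sl2_inducing.secondCountableTopology
instance : BorelSpace SL2 := ⟨rfl⟩

lemma sl2_closedEmbedding :
    Topology.IsClosedEmbedding (fun g : SL2 => (g : Matrix (Fin 2) (Fin 2) ℝ)) := by
  refine ⟨sl2_embedding, ?_⟩
  have h : Set.range (fun g : SL2 => (g : Matrix (Fin 2) (Fin 2) ℝ))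
      = {A : Matrix (Fin 2) (Fin 2) ℝ | A.det = 1} := by
    ext A; constructor
    · rintro ⟨g, rfl⟩; exact g.2
    · intro hA; exact ⟨⟨A, hA⟩, rfl⟩
  rw [h]
  exact isClosed_eq (continuous_id.matrix_det) continuous_const

instance : LocallyCompactSpace SL2 := sl2_closedEmbedding.locallyCompactSpace

/-! ### Unimodularity of `SL(2,ℝ)` -/

noncomputable def E12 (b : ℝ) : SL2 := ⟨!![1, b; 0, 1], by simp [Matrix.det_fin_two_of]⟩
noncomputable def E21 (c : ℝ) : SL2 := ⟨!![1, 0; c, 1], by simp [Matrix.det_fin_two_of]⟩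

lemma mul_def (g h : SL2) : ((g * h : SL2) : Matrix (Fin 2) (Fin 2) ℝ) = g * h := rfl

lemma E12_mul (b b' : ℝ) : E12 b * E12 b' = E12 (b + b') := by
  apply Subtype.ext
  rw [mul_def]
  show (!![1, b; 0, 1] * !![1, b'; 0, 1] : Matrix (Fin 2) (Fin 2) ℝ) = !![1, b + b'; 0, 1]
  ext i j; fin_cases i <;> fin_cases j <;>
    simp [Matrix.mul_apply, Fin.sum_univ_two] <;> ring

lemma E21_mul (c c' : ℝ) : E21 c * E21 c' = E21 (c + c') := by
  apply Subtype.ext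
  rw [mul_def]
  show (!![1, 0; c, 1] * !![1, 0; c', 1] : Matrix (Fin 2) (Fin 2) ℝ) = !![1, 0; c + c', 1]
  ext i j; fin_cases i <;> fin_cases j <;>
    simp [Matrix.mul_apply, Fin.sum_univ_two] <;> ring

noncomputable def dd : SL2 := upperTriangular (Real.sqrt 2) 0 (by positivity)

lemma dd_E12 (b : ℝ) : dd * E12 b = E12 (2 * b) * dd := by
  apply Subtype.ext
  rw [mul_def, mul_def]
  show (!![Real.sqrt 2, 0; 0, (Real.sqrt 2)⁻¹] * !![1, b; 0, 1] : Matrix (Fin 2) (Fin 2) ℝ)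
      = !![1, 2*b; 0, 1] * !![Real.sqrt 2, 0; 0, (Real.sqrt 2)⁻¹]
  have h2 : Real.sqrt 2 * Real.sqrt 2 = 2 := Real.mul_self_sqrt (by norm_num)
  ext i j; fin_cases i <;> fin_cases j <;>
    simp [Matrix.mul_apply, Fin.sum_univ_two] <;>
    · field_simp; linear_combination b * h2

lemma dd_E21 (c : ℝ) : dd * E21 (2 * c) = E21 c * dd := by
  apply Subtype.ext
  rw [mul_def, mul_def]
  show (!![Real.sqrt 2, 0; 0, (Real.sqrt 2)⁻¹] * !![1, 0; 2*c, 1] : Matrix (Fin 2) (Fin 2) ℝ)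
      = !![1, 0; c, 1] * !![Real.sqrt 2, 0; 0, (Real.sqrt 2)⁻¹]
  have h2 : Real.sqrt 2 * Real.sqrt 2 = 2 := Real.mul_self_sqrt (by norm_num)
  have h2' : (Real.sqrt 2) ≠ 0 := by positivity
  ext i j; fin_cases i <;> fin_cases j <;>
    simp [Matrix.mul_apply, Fin.sum_univ_two] <;>
    · field_simp; linear_combination -c * h2

lemma decomp (g : SL2) (hc : (g : Matrix (Fin 2) (Fin 2) ℝ) 1 0 ≠ 0) :
    g = E12 (((g : Matrix (Fin 2) (Fin 2) ℝ) 0 0 - 1) / (g : Matrix (Fin 2) (Fin 2) ℝ) 1 0)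
        * E21 ((g : Matrix (Fin 2) (Fin 2) ℝ) 1 0)
        * E12 (((g : Matrix (Fin 2) (Fin 2) ℝ) 1 1 - 1) / (g : Matrix (Fin 2) (Fin 2) ℝ) 1 0) := by
  set a := (g : Matrix (Fin 2) (Fin 2) ℝ) 0 0
  set b := (g : Matrix (Fin 2) (Fin 2) ℝ) 0 1
  set c := (g : Matrix (Fin 2) (Fin 2) ℝ) 1 0
  set d := (g : Matrix (Fin 2) (Fin 2) ℝ) 1 1
  have hdet : a * d - b * c = 1 := by
    have := g.2
    rwa [Matrix.det_fin_two] at this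
  apply Subtype.ext
  rw [mul_def, mul_def]
  show (g : Matrix (Fin 2) (Fin 2) ℝ)
      = !![1, (a-1)/c; 0, 1] * !![1, 0; c, 1] * !![1, (d-1)/c; 0, 1]
  have hg : (g : Matrix (Fin 2) (Fin 2) ℝ) = !![a, b; c, d] := by
    ext i j; fin_cases i <;> fin_cases j <;> rfl
  rw [hg]
  ext i j; fin_cases i <;> fin_cases j <;>
    simp [Matrix.mul_apply, Fin.sum_univ_two] <;> field_simp <;> ring_nf <;> nlinarith [hdet]

section Unimodular

variable (μ : Measure SL2) [μ.IsHaarMeasure]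

noncomputable def Δ (g : SL2) : ℝ≥0 :=
  Measure.haarScalarFactor (μ.map (· * g)) μ

lemma key (g : SL2) : μ.map (· * g) = Δ μ g • μ :=
  Measure.isMulLeftInvariant_eq_smul _ _

lemma smul_cancel {c₁ c₂ : ℝ≥0} (h : c₁ • μ = c₂ • μ) : c₁ = c₂ := by
  obtain ⟨K⟩ : Nonempty (TopologicalSpace.PositiveCompacts SL2) := inferInstance
  have h1 : (c₁ : ℝ≥0∞) * μ K = (c₂ : ℝ≥0∞) * μ K := by
    have := congrArg (fun ν : Measure SL2 => ν (K : Set SL2)) h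
    simpa [Measure.smul_apply, smul_eq_mul] using this
  have hK0 : μ K ≠ 0 := (μ.measure_pos_of_nonempty_interior K.interior_nonempty).ne'
  have hKt : μ K ≠ ⊤ := K.isCompact.measure_lt_top.ne
  exact_mod_cast (ENNReal.mul_left_inj hK0 hKt).1 h1

lemma Δ_mul (g h : SL2) : Δ μ (g * h) = Δ μ g * Δ μ h := by
  apply smul_cancel μ
  rw [← key μ (g * h)]
  have h1 : (fun x : SL2 => x * (g * h)) = (· * h) ∘ (· * g) := by
    funext x; simp [Function.comp, mul_assoc]
  rw [h1, ← Measure.map_map (measurable_mul_const h) (measurable_mul_const g),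
    key μ g, Measure.map_smul, key μ h, smul_smul, mul_comm]

lemma Δ_one : Δ μ 1 = 1 := by
  apply smul_cancel μ
  rw [← key μ 1]
  simp

lemma Δ_ne_zero (g : SL2) : Δ μ g ≠ 0 :=
  (Measure.haarScalarFactor_pos_of_isHaarMeasure _ _).ne'

lemma Δ_E12 (b : ℝ) : Δ μ (E12 b) = 1 := by
  have hc := congrArg (Δ μ) (dd_E12 b)
  rw [Δ_mul, Δ_mul] at hc
  have h1 : Δ μ (E12 b) = Δ μ (E12 (2 * b)) :=
    mul_right_cancel₀ (Δ_ne_zero μ dd) (by rw [← hc, mul_comm])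
  have h2 : Δ μ (E12 (2 * b)) = Δ μ (E12 b) * Δ μ (E12 b) := by
    rw [show (2:ℝ) * b = b + b by ring, ← E12_mul, Δ_mul]
  have h3 := h1.trans h2
  have h4 := mul_left_cancel₀ (Δ_ne_zero μ (E12 b))
    (show Δ μ (E12 b) * 1 = Δ μ (E12 b) * Δ μ (E12 b) by rw [mul_one, ← h3])
  exact h4.symm

lemma Δ_E21 (c : ℝ) : Δ μ (E21 c) = 1 := by
  have hc := congrArg (Δ μ) (dd_E21 c)
  rw [Δ_mul, Δ_mul] at hc
  have h1 : Δ μ (E21 (2 * c)) = Δ μ (E21 c) :=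
    mul_right_cancel₀ (Δ_ne_zero μ dd) (by rw [← hc, mul_comm])
  have h2 : Δ μ (E21 (2 * c)) = Δ μ (E21 c) * Δ μ (E21 c) := by
    rw [show (2:ℝ) * c = c + c by ring, ← E21_mul, Δ_mul]
  have h3 := h1.symm.trans h2
  have h4 := mul_left_cancel₀ (Δ_ne_zero μ (E21 c))
    (show Δ μ (E21 c) * 1 = Δ μ (E21 c) * Δ μ (E21 c) by rw [mul_one, ← h3])
  exact h4.symm

lemma Δ_eq_one_of_ne (g : SL2) (hc : (g : Matrix (Fin 2) (Fin 2) ℝ) 1 0 ≠ 0) :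
    Δ μ g = 1 := by
  rw [decomp g hc, Δ_mul, Δ_mul, Δ_E12, Δ_E21, Δ_E12]
  norm_num

lemma Δ_eq_one (g : SL2) : Δ μ g = 1 := by
  by_cases hc : (g : Matrix (Fin 2) (Fin 2) ℝ) 1 0 ≠ 0
  · exact Δ_eq_one_of_ne μ g hc
  · push_neg at hc
    have hdet : (g : Matrix (Fin 2) (Fin 2) ℝ) 0 0 * (g : Matrix (Fin 2) (Fin 2) ℝ) 1 1
        - (g : Matrix (Fin 2) (Fin 2) ℝ) 0 1 * (g : Matrix (Fin 2) (Fin 2) ℝ) 1 0 = 1 := by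
      have := g.2
      rwa [Matrix.det_fin_two] at this
    have hd : (g : Matrix (Fin 2) (Fin 2) ℝ) 1 1 ≠ 0 := by
      intro h0
      rw [hc, h0] at hdet
      norm_num at hdet
    have hg' : ((g * E21 1 : SL2) : Matrix (Fin 2) (Fin 2) ℝ) 1 0
        = (g : Matrix (Fin 2) (Fin 2) ℝ) 1 0 + (g : Matrix (Fin 2) (Fin 2) ℝ) 1 1 := by
      have hcoe : ((g * E21 1 : SL2) : Matrix (Fin 2) (Fin 2) ℝ)
          = (g : Matrix (Fin 2) (Fin 2) ℝ) * !![(1:ℝ), 0; 1, 1] := rfl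
      rw [hcoe]
      simp [Matrix.mul_apply, Fin.sum_univ_two]
    have hne : ((g * E21 1 : SL2) : Matrix (Fin 2) (Fin 2) ℝ) 1 0 ≠ 0 := by
      rw [hg', hc, zero_add]; exact hd
    have h1 : Δ μ (g * E21 1) = 1 := Δ_eq_one_of_ne μ _ hne
    rw [Δ_mul, Δ_E21, mul_one] at h1
    exact h1

lemma map_mul_right_eq (g : SL2) : μ.map (· * g) = μ := by
  rw [key μ g, Δ_eq_one, one_smul]

lemma measurePreserving_mul_right' (g : SL2) :
    MeasurePreserving (· * g) μ μ :=
  ⟨measurable_mul_const g, map_mul_right_eq μ g⟩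

end Unimodular

end PSIV

open scoped Pointwise

/-- **Vanishing of invariant vectors in the analytic principal series**.
If `Γ` is a discrete subgroup of `G = SL(2,ℝ)` admitting a fundamental domain of finite
Haar measure (for the action of `Γ` on `G` by right multiplication), `t ∈ ℝ`, and
`f : G → ℂ` is continuous with
`f ([[a,b],[0,a⁻¹]] * x) = |a|^(1+it) * f x` for all `a ≠ 0`, `b ∈ ℝ`, `x ∈ G`, and
`f (x * γ) = f x` for all `γ ∈ Γ`, then `f = 0`. -/
theorem principal_series_invariants_vanish
    (μ : Measure SL2) [μ.IsHaarMeasure]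
    (Γ : Subgroup SL2) [DiscreteTopology Γ]
    (hfund : ∃ s : Set SL2, MeasurableSet s ∧ μ s < ⊤ ∧ IsFundamentalDomain Γ.op s μ)
    (t : ℝ) (f : SL2 → ℂ) (hf : Continuous f)
    (hcov : ∀ (a b : ℝ) (ha : a ≠ 0) (x : SL2),
      f (upperTriangular a b ha * x) =
        (((|a| : ℝ) : ℂ) ^ ((1 : ℂ) + (t : ℂ) * Complex.I)) * f x)
    (hinv : ∀ (x : SL2) (γ : Γ), f (x * (γ : SL2)) = f x) :
    f = 0 := by
  classical
  obtain ⟨D, hDm, hDfin, hDfd⟩ := hfund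
  haveI : Countable Γ := TopologicalSpace.separableSpace_iff_countable.mp inferInstance
  haveI : Countable Γ.op := Countable.of_equiv Γ (Subgroup.equivOp Γ)
  letI : MeasurableSpace Γ.op := ⊤
  haveI : MeasurableSMul Γ.op SL2 :=
    { measurable_const_smul := fun γ => measurable_mul_const ((γ : SL2ᵐᵒᵖ).unop),
      measurable_smul_const := fun _ => measurable_from_top }
  haveI : SMulInvariantMeasure Γ.op SL2 μ := ⟨fun γ s hs => by
    have h : (fun x : SL2 => γ • x) = (· * (γ : SL2ᵐᵒᵖ).unop) := rfl
    rw [h, (PSIV.measurePreserving_mul_right' μ _).measure_preimage hs.nullMeasurableSet]⟩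
  haveI : SMulCommClass SL2 Γ.op SL2 := ⟨fun g γ x => by
    show g * (x * (γ : SL2ᵐᵒᵖ).unop) = (g * x) * (γ : SL2ᵐᵒᵖ).unop
    rw [mul_assoc]⟩
  set gn : SL2 → ℝ := fun x => ‖f x‖ with hgn
  have hgnc : Continuous gn := hf.norm
  set S : ℝ → Set SL2 := fun c => {x | c < gn x} with hS
  have hSopen : ∀ c, IsOpen (S c) := fun c => isOpen_lt continuous_const hgnc
  have hSmeas : ∀ c, MeasurableSet (S c) := fun c => (hSopen c).measurableSet
  have hnorm : ∀ (a : ℝ) (ha : a ≠ 0) (x : SL2),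
      gn (upperTriangular a 0 ha * x) = |a| * gn x := by
    intro a ha x
    show ‖f _‖ = _
    rw [hcov a 0 ha x, norm_mul]
    congr 1
    rw [Complex.norm_cpow_eq_rpow_re_of_pos (abs_pos.2 ha)]
    simp
  have hSinv_pre : ∀ (γ : Γ.op) (c : ℝ), (fun x => γ • x) ⁻¹' (S c) = S c := by
    intro γ c
    ext x
    show c < gn (x * (γ : SL2ᵐᵒᵖ).unop) ↔ c < gn x
    have h : f (x * (γ : SL2ᵐᵒᵖ).unop) = f x :=
      hinv x ⟨(γ : SL2ᵐᵒᵖ).unop, Subgroup.mem_op.1 γ.2⟩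
    simp [hgn, h]
  have hconst : ∀ a : ℝ, a ≠ 0 → ∀ c : ℝ, μ (S (|a| * c) ∩ D) = μ (S c ∩ D) := by
    intro a ha c
    set u := upperTriangular a 0 ha with hu
    have hL : MeasurePreserving (fun x => u * x) μ μ := measurePreserving_mul_left μ u
    have hpre : (fun x => u * x) ⁻¹' (S (|a| * c)) = S c := by
      ext x
      show |a| * c < gn (u * x) ↔ c < gn x
      rw [hnorm a ha x]
      exact mul_lt_mul_iff_right₀ (abs_pos.2 ha)
    have h1 : μ (S (|a| * c) ∩ D) = μ (S c ∩ (fun x => u * x) ⁻¹' D) := by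
      rw [← hL.measure_preimage ((hSmeas _).inter hDm).nullMeasurableSet,
        Set.preimage_inter, hpre]
    have h2 : (fun x => u * x) ⁻¹' D = u⁻¹ • D := Set.preimage_smul u D
    rw [h1, h2]
    exact (hDfd.smul_of_comm u⁻¹).measure_set_eq hDfd (hSmeas c) (fun γ => hSinv_pre γ c)
  have hconst' : ∀ c : ℝ, 0 < c → μ (S c ∩ D) = μ (S 1 ∩ D) := by
    intro c hc
    have h := hconst c hc.ne' 1
    rwa [abs_of_pos hc, mul_one] at h
  have hzero : μ (S 1 ∩ D) = 0 := by
    have hseq : ∀ n : ℕ, μ (S ((n : ℝ) + 1) ∩ D) = μ (S 1 ∩ D) := fun n =>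
      hconst' _ (by positivity)
    have hanti : Antitone (fun n : ℕ => S ((n : ℝ) + 1) ∩ D) := by
      intro n m h
      refine Set.inter_subset_inter_left _ (fun x hx => ?_)
      have h1 : ((m : ℝ) + 1) < gn x := hx
      have h2 : (n : ℝ) ≤ (m : ℝ) := by exact_mod_cast h
      show ((n : ℝ) + 1) < gn x
      linarith
    have hempty : (⋂ n : ℕ, (S ((n : ℝ) + 1) ∩ D)) = ∅ := by
      ext x
      simp only [Set.mem_iInter, Set.mem_empty_iff_false, iff_false]
      intro hx
      obtain ⟨n, hn⟩ := exists_nat_gt (gn x)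
      have h1 : (n : ℝ) + 1 < gn x := (hx n).1
      linarith
    have htend := tendsto_measure_iInter_atTop (μ := μ)
      (fun n => ((hSmeas _).inter hDm).nullMeasurableSet) hanti
      ⟨0, (lt_of_le_of_lt (measure_mono Set.inter_subset_right) hDfin).ne⟩
    rw [hempty, measure_empty] at htend
    have hconst_seq : (fun n : ℕ => μ (S ((n : ℝ) + 1) ∩ D))
        = fun _ : ℕ => μ (S 1 ∩ D) := funext hseq
    rw [show (μ ∘ fun n : ℕ => S ((n : ℝ) + 1) ∩ D)
        = fun n : ℕ => μ (S ((n : ℝ) + 1) ∩ D) from rfl, hconst_seq] at htend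
    exact tendsto_nhds_unique tendsto_const_nhds htend
  funext x₀
  show f x₀ = 0
  by_contra hx₀
  have hpos : 0 < gn x₀ := by simpa [hgn] using norm_pos_iff.2 hx₀
  set c₀ : ℝ := gn x₀ / 2 with hc₀def
  have hc₀ : 0 < c₀ := by positivity
  have hx₀S : x₀ ∈ S c₀ := half_lt_self hpos
  have hSset : ∀ γ : Γ.op, γ • S c₀ = S c₀ := by
    intro γ
    calc γ • S c₀ = (fun x => γ⁻¹ • x) ⁻¹' (S c₀) := by
          rw [Set.preimage_smul γ⁻¹ (S c₀), inv_inv]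
      _ = S c₀ := hSinv_pre γ⁻¹ c₀
  have hmu : μ (S c₀) = 0 :=
    hDfd.measure_zero_of_invariant _ hSset ((hconst' c₀ hc₀).trans hzero)
  exact ((hSopen c₀).measure_pos μ ⟨x₀, hx₀S⟩).ne' hmu
end

section
/- Let X and Y be topological vector spaces over ℂ whose underlying additive topological groups are complete and metrizable, and let T : X → Y be a continuous linear map. Let Z be a closed linear subspace of Y with range(T) ⊆ Z such that the quotient ℂ-vector space Z / range(T) is finite-dimensional. Then range(T) is a closed subspace of Y, and the induced continuous linear bijection X / ker(T) → range(T) (quotient topology on the source, subspace topology on the target) is a homeomorphism. -/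
open Filter Set Topology Pointwise

set_option linter.unusedSectionVars false
set_option maxHeartbeats 1000000

section OMT

lemma omt_closure_subset_add {G : Type*} [AddCommGroup G] [TopologicalSpace G]
    [IsTopologicalAddGroup G] (A : Set G) {N : Set G} (hN : N ∈ 𝓝 (0 : G)) :
    closure A ⊆ A + N := by
  intro a ha
  have ht : (fun z => a - z) ⁻¹' N ∈ 𝓝 a := by
    have : ContinuousAt (fun z => a - z) a := (continuous_const.sub continuous_id).continuousAt
    apply this
    simpa using hN
  obtain ⟨z, hz1, hz2⟩ := _root_.mem_closure_iff_nhds.1 ha _ ht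
  refine ⟨z, hz2, a - z, hz1, ?_⟩
  show z + (a - z) = a
  abel

variable {E F : Type*}
    [AddCommGroup E] [Module ℂ E] [UniformSpace E] [IsUniformAddGroup E]
    [CompleteSpace E] [TopologicalSpace.MetrizableSpace E] [ContinuousSMul ℂ E]
    [AddCommGroup F] [Module ℂ F] [UniformSpace F] [IsUniformAddGroup F]
    [CompleteSpace F] [TopologicalSpace.MetrizableSpace F] [ContinuousSMul ℂ F]


variable {E F : Type*}
    [AddCommGroup E] [Module ℂ E] [UniformSpace E] [IsUniformAddGroup E]
    [CompleteSpace E] [TopologicalSpace.MetrizableSpace E] [ContinuousSMul ℂ E]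
    [AddCommGroup F] [Module ℂ F] [UniformSpace F] [IsUniformAddGroup F]
    [CompleteSpace F] [TopologicalSpace.MetrizableSpace F] [ContinuousSMul ℂ F]

lemma omt_closure_image_nhds (f : E →L[ℂ] F) (hsurj : Function.Surjective f)
    {U : Set E} (hU : U ∈ 𝓝 (0 : E)) : closure (f '' U) ∈ 𝓝 (0 : F) := by
  haveI : (uniformity F).IsCountablyGenerated := by
    rw [uniformity_eq_comap_nhds_zero]
    exact Filter.comap.isCountablyGenerated _ _
  obtain ⟨V, hV, hVU⟩ := exists_nhds_half_neg hU
  -- the closed sets (n+1) • closure (f '' V) cover F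
  have hcover : ∀ z : F, ∃ n : ℕ, z ∈ ((n : ℂ) + 1) • closure (f '' V) := by
    intro z
    obtain ⟨e, rfl⟩ := hsurj z
    have habs : Absorbs ℂ V {e} := absorbent_nhds_zero hV e
    obtain ⟨r, hr⟩ := absorbs_iff_norm.1 habs
    obtain ⟨n, hn⟩ := exists_nat_ge r
    refine ⟨n, ?_⟩
    have he : e ∈ ((n : ℂ) + 1) • V := by
      refine hr ((n : ℂ) + 1) ?_ rfl
      have : ‖((n : ℂ) + 1)‖ = (n : ℝ) + 1 := by
        rw [show ((n : ℂ) + 1) = ((n + 1 : ℕ) : ℂ) by push_cast; ring,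
          Complex.norm_natCast]
        push_cast; ring
      rw [this]; linarith
    obtain ⟨v, hv, rfl⟩ := he
    rw [map_smul]
    exact smul_mem_smul_set (subset_closure (mem_image_of_mem _ hv))
  -- Baire
  obtain ⟨n, hn⟩ := nonempty_interior_of_iUnion_of_closed
    (f := fun n : ℕ => ((n : ℂ) + 1) • closure (f '' V))
    (fun n => (isClosed_closure).smul_of_ne_zero (Nat.cast_add_one_ne_zero n))
    (by ext z; simpa using hcover z)
  rw [interior_smul₀ (Nat.cast_add_one_ne_zero n)] at hn
  have hn' : (interior (closure (f '' V))).Nonempty := smul_set_nonempty.1 hn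
  obtain ⟨y, hy⟩ := hn'
  -- the open set y + (interior (closure (f '' V))) - y... use preimage
  have hmain : (fun z => y + z) ⁻¹' interior (closure (f '' V)) ⊆ closure (f '' U) := by
    intro q hq
    have h1 : y + q ∈ closure (f '' V) := interior_subset hq
    have h2 : y ∈ closure (f '' V) := interior_subset hy
    have hsub : ∀ a ∈ f '' V, ∀ b ∈ f '' V, a - b ∈ f '' U := by
      rintro a ⟨u, hu, rfl⟩ b ⟨v, hv', rfl⟩
      exact ⟨u - v, hVU u hu v hv', by simp⟩
    have := map_mem_closure₂ (f := fun a b : F => a - b)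
      (continuous_fst.sub continuous_snd) h1 h2 hsub
    simpa using this
  refine Filter.mem_of_superset ?_ hmain
  refine IsOpen.mem_nhds (isOpen_interior.preimage (continuous_const.add continuous_id)) ?_
  simpa using hy


lemma omt_image_nhds (f : E →L[ℂ] F) (hsurj : Function.Surjective f)
    {U : Set E} (hU : U ∈ 𝓝 (0 : E)) : f '' U ∈ 𝓝 (0 : F) := by
  -- countable bases
  obtain ⟨B, hB⟩ := (𝓝 (0 : E)).exists_antitone_basis
  obtain ⟨C, hC⟩ := (𝓝 (0 : F)).exists_antitone_basis
  have hBmem : ∀ n, B n ∈ 𝓝 (0 : E) := fun n => hB.1.mem_of_mem trivial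
  have hCmem : ∀ n, C n ∈ 𝓝 (0 : F) := fun n => hC.1.mem_of_mem trivial
  have hfC : ∀ m, f ⁻¹' (C m) ∈ 𝓝 (0 : E) := by
    intro m
    have h0 : Filter.Tendsto f (𝓝 0) (𝓝 (0 : F)) := by
      simpa using (f.continuous.tendsto (0 : E))
    exact h0 (hCmem m)
  obtain ⟨U₁, hU₁, hU₁U⟩ := exists_nhds_zero_half hU
  -- the shrinking function
  have shrink : ∀ t : Set E, t ∈ 𝓝 (0 : E) →
      ∃ V : Set E, V ∈ 𝓝 (0 : E) ∧ (∀ x ∈ V, -x ∈ V) ∧ V + V ⊆ t := by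
    intro t ht
    obtain ⟨V₁, hV₁, h⟩ := exists_nhds_zero_half ht
    refine ⟨V₁ ∩ (-V₁), Filter.inter_mem hV₁ (by simpa using neg_mem_nhds_zero E hV₁),
      ?_, ?_⟩
    · rintro x ⟨h1, h2⟩; exact ⟨by simpa using h2, by simpa using h1⟩
    · rintro z ⟨a, ⟨ha, -⟩, b, ⟨hb, -⟩, rfl⟩; exact h a ha b hb
  choose sh hsh1 hsh2 hsh3 using shrink
  have h00 : U₁ ∩ B 0 ∩ f ⁻¹' (C 0) ∈ 𝓝 (0 : E) :=
    Filter.inter_mem (Filter.inter_mem hU₁ (hBmem 0)) (hfC 0)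
  -- the sequence of neighborhoods
  let WS : ℕ → {V : Set E // V ∈ 𝓝 (0 : E)} := fun n =>
    Nat.rec ⟨sh _ h00, hsh1 _ h00⟩
      (fun n p =>
        ⟨sh (p.1 ∩ B (n + 1) ∩ f ⁻¹' (C (n + 1)))
            (Filter.inter_mem (Filter.inter_mem p.2 (hBmem (n + 1))) (hfC (n + 1))),
          hsh1 _ _⟩) n
  let W : ℕ → Set E := fun n => (WS n).1
  have hWmem : ∀ n, W n ∈ 𝓝 (0 : E) := fun n => (WS n).2
  have hW0mem : ∀ n, (0 : E) ∈ W n := fun n => mem_of_mem_nhds (hWmem n)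
  have hWsym : ∀ n, ∀ x ∈ W n, -x ∈ W n := by
    intro n
    cases n with
    | zero => exact hsh2 _ h00
    | succ n => exact hsh2 _ _
  have hW0 : W 0 + W 0 ⊆ U₁ ∩ B 0 ∩ f ⁻¹' (C 0) := hsh3 _ h00
  have hWs : ∀ n, W (n + 1) + W (n + 1) ⊆ W n ∩ B (n + 1) ∩ f ⁻¹' (C (n + 1)) :=
    fun n => hsh3 _ _
  have hWself : ∀ n, W n ⊆ W n + W n := fun n x hx =>
    ⟨0, hW0mem n, x, hx, by simp⟩
  have hWB : ∀ n, W n + W n ⊆ B n := by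
    intro n
    cases n with
    | zero => exact hW0.trans (inter_subset_left.trans inter_subset_right)
    | succ n => exact (hWs n).trans (inter_subset_left.trans inter_subset_right)
  have hWC : ∀ n, W n ⊆ f ⁻¹' (C n) := by
    intro n
    refine (hWself n).trans ?_
    cases n with
    | zero => exact hW0.trans inter_subset_right
    | succ n => exact (hWs n).trans inter_subset_right
  have hWanti : ∀ n, W (n + 1) ⊆ W n := fun n =>
    (hWself (n + 1)).trans ((hWs n).trans (inter_subset_left.trans inter_subset_left))
  have hWanti' : ∀ {m n}, m ≤ n → W n ⊆ W m := by
    intro m n h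
    induction h with
    | refl => exact Set.Subset.refl _
    | step h ih => exact (hWanti _).trans ih
  have hW0U : W 0 + W 0 ⊆ U₁ := hW0.trans (inter_subset_left.trans inter_subset_left)
  -- main claim : closure (f '' W 0) ⊆ f '' U
  have main : closure (f '' W 0) ⊆ f '' U := by
    intro y hy
    -- construct the sequences
    have key : ∀ n (w : F), w ∈ closure (f '' W n) →
        ∃ x, x ∈ W n ∧ w - f x ∈ closure (f '' W (n + 1)) := by
      intro n w hw
      have hN : closure (f '' W (n + 1)) ∈ 𝓝 (0 : F) :=
        omt_closure_image_nhds f hsurj (hWmem (n + 1))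
      have ht : (fun z => w - z) ⁻¹' closure (f '' W (n + 1)) ∈ 𝓝 w := by
        have : ContinuousAt (fun z => w - z) w := (continuous_const.sub continuous_id).continuousAt
        apply this
        simpa using hN
      obtain ⟨z, hz1, x, hx, rfl⟩ := _root_.mem_closure_iff_nhds.1 hw _ ht
      exact ⟨x, hx, hz1⟩
    choose xk hxk1 hxk2 using key
    let yseq : ∀ _ : ℕ, {w : F // w ∈ closure (f '' W _)} := fun n =>
      Nat.rec (motive := fun n => {w : F // w ∈ closure (f '' W n)}) ⟨y, hy⟩
        (fun n p => ⟨p.1 - f (xk n p.1 p.2), hxk2 n p.1 p.2⟩) n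
    let xs : ℕ → E := fun n => xk n (yseq n).1 (yseq n).2
    have hxs : ∀ n, xs n ∈ W n := fun n => hxk1 _ _ _
    have hyrec : ∀ n, (yseq (n + 1)).1 = (yseq n).1 - f (xs n) := fun n => rfl
    have hymem : ∀ n, (yseq n).1 ∈ closure (f '' W n) := fun n => (yseq n).2
    set s : ℕ → E := fun n => ∑ i ∈ Finset.range n, xs i with hs
    have htel : ∀ n, (yseq n).1 = y - f (s n) := by
      intro n
      induction n with
      | zero =>
        have : (yseq 0).1 = y := rfl
        simp [this, s]
      | succ n ih =>
        rw [hyrec n, ih]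
        simp only [hs, Finset.sum_range_succ, map_add]
        abel
    -- partial sums in W m + W m
    have hsum : ∀ k m, (∑ i ∈ Finset.Ico m (m + k), xs i) ∈ W m + W m := by
      intro k
      induction k with
      | zero => intro m; simpa using ⟨0, hW0mem m, 0, hW0mem m, by simp⟩
      | succ k ih =>
        intro m
        rw [Finset.sum_eq_sum_Ico_succ_bot (by omega)]
        have htail : (∑ i ∈ Finset.Ico (m + 1) (m + (k + 1)), xs i) ∈ W m := by
          have : (∑ i ∈ Finset.Ico (m + 1) (m + 1 + k), xs i) ∈ W (m + 1) + W (m + 1) :=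
            ih (m + 1)
          have h2 := (hWs m) this
          rw [show m + (k + 1) = m + 1 + k by omega]
          exact inter_subset_left.trans inter_subset_left h2
        exact ⟨xs m, hxs m, _, htail, rfl⟩
    have hsum' : ∀ {m n}, m ≤ n → (∑ i ∈ Finset.Ico m n, xs i) ∈ W m + W m := by
      intro m n h
      have := hsum (n - m) m
      rwa [show m + (n - m) = n by omega] at this
    -- Cauchy
    have hcauchy : CauchySeq s := by
      refine cauchySeq_of_controlled (fun n => {p : E × E | p.2 - p.1 ∈ B n}) ?_ ?_
      · intro t ht
        rw [uniformity_eq_comap_nhds_zero] at ht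
        obtain ⟨u, hu, hut⟩ := ht
        obtain ⟨n, -, hn⟩ := hB.1.mem_iff.1 hu
        exact ⟨n, fun p hp => hut (hn hp)⟩
      · intro N m n hm hn
        simp only [mem_setOf_eq]
        rcases le_total m n with h | h
        · have : s n - s m = ∑ i ∈ Finset.Ico m n, xs i := by
            rw [Finset.sum_Ico_eq_sub _ h]
          rw [this]
          exact hWB N (Set.add_subset_add (hWanti' hm) (hWanti' hm) (hsum' h))
        · have heq : s n - s m = -(∑ i ∈ Finset.Ico n m, xs i) := by
            rw [Finset.sum_Ico_eq_sub _ h]; abel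
          rw [heq]
          obtain ⟨a, ha, b, hb, hab⟩ := hsum' h
          refine hWB N ⟨-a, hWsym N a (hWanti' hn ha), -b, hWsym N b (hWanti' hn hb), ?_⟩
          rw [← hab]; show -a + -b = -(a + b); abel
    obtain ⟨x, hx⟩ := cauchySeq_tendsto_of_complete hcauchy
    -- y_n → 0
    have hy0 : Filter.Tendsto (fun n => (yseq n).1) atTop (𝓝 (0 : F)) := by
      rw [Filter.tendsto_def]
      intro V hV
      obtain ⟨D, hD, hDclosed, hDV⟩ := exists_mem_nhds_isClosed_subset hV
      obtain ⟨N, -, hND⟩ := hC.1.mem_iff.1 hD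
      rw [Filter.mem_atTop_sets]
      refine ⟨N, fun n hn => ?_⟩
      have h1 : (yseq n).1 ∈ closure (C n) :=
        closure_mono (Set.image_subset_iff.2 (hWC n)) (hymem n)
      have h2 : C n ⊆ D := (hC.2 hn).trans hND
      exact hDV (hDclosed.closure_subset_iff.2 h2 h1)
    -- conclude
    have hfs : Filter.Tendsto (fun n => f (s n)) atTop (𝓝 (f x)) :=
      (f.continuous.tendsto x).comp hx
    have hfs' : Filter.Tendsto (fun n => f (s n)) atTop (𝓝 y) := by
      have : (fun n => f (s n)) = fun n => y - (yseq n).1 := by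
        funext n; rw [htel n]; abel
      rw [this]
      have h := Filter.Tendsto.sub
        (tendsto_const_nhds : Filter.Tendsto (fun _ : ℕ => y) atTop (𝓝 y)) hy0
      rwa [sub_zero] at h
    have hxy : f x = y := tendsto_nhds_unique hfs hfs'
    have hxU : x ∈ U := by
      have hmem : x ∈ closure U₁ := by
        refine _root_.mem_closure_of_tendsto hx (Filter.Eventually.of_forall fun n => ?_)
        have : s n = ∑ i ∈ Finset.Ico 0 (0 + n), xs i := by
          simp only [hs, Finset.range_eq_Ico, Nat.zero_add]
        rw [this]
        exact hW0U (hsum n 0)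
      have := omt_closure_subset_add U₁ hU₁ hmem
      obtain ⟨a, ha, b, hb, rfl⟩ := this
      exact hU₁U a ha b hb
    exact ⟨x, hxU, hxy⟩
  exact Filter.mem_of_superset (omt_closure_image_nhds f hsurj (hWmem 0)) main


lemma omt_isOpenMap (f : E →L[ℂ] F) (hsurj : Function.Surjective f) :
    IsOpenMap f := by
  intro s hs
  rw [isOpen_iff_mem_nhds]
  rintro - ⟨x, hx, rfl⟩
  have hU : (fun u => x + u) ⁻¹' s ∈ 𝓝 (0 : E) := by
    have : ContinuousAt (fun u => x + u) 0 := (continuous_const.add continuous_id).continuousAt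
    apply this
    simpa using hs.mem_nhds hx
  have h2 := omt_image_nhds f hsurj hU
  have h3 : (fun v => f x + v) '' (f '' ((fun u => x + u) ⁻¹' s)) ⊆ f '' s := by
    rintro - ⟨-, ⟨u, hu, rfl⟩, rfl⟩
    exact ⟨x + u, hu, by simp⟩
  refine Filter.mem_of_superset ?_ h3
  have h4 := (isOpenMap_add_left (f x)).image_mem_nhds h2
  simpa using h4


end OMT

/-- **Open mapping with finite-codimensional closed target (step in Lemma 5.5).**
Let `X`, `Y` be topological vector spaces over `ℂ` whose underlying additive topological
groups are complete and metrizable, and `T : X → Y` a continuous linear map.  If `Z` is a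
closed subspace of `Y` containing `range T` such that `Z / range T` is finite dimensional,
then `range T` is closed and the induced continuous linear bijection
`X / ker T → range T` is a homeomorphism (quotient topology on the source, subspace
topology on the target). -/
theorem range_closed_and_quotKerEquivRange_homeomorph
    {X Y : Type*}
    [AddCommGroup X] [Module ℂ X] [UniformSpace X] [IsUniformAddGroup X]
    [CompleteSpace X] [TopologicalSpace.MetrizableSpace X] [ContinuousSMul ℂ X]
    [AddCommGroup Y] [Module ℂ Y] [UniformSpace Y] [IsUniformAddGroup Y]
    [CompleteSpace Y] [TopologicalSpace.MetrizableSpace Y] [ContinuousSMul ℂ Y]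
    (T : X →L[ℂ] Y) (Z : Submodule ℂ Y) (hZclosed : IsClosed (Z : Set Y))
    (hTZ : LinearMap.range (T : X →ₗ[ℂ] Y) ≤ Z)
    (hfd : FiniteDimensional ℂ
      (Z ⧸ Submodule.comap Z.subtype (LinearMap.range (T : X →ₗ[ℂ] Y)))) :
    IsClosed ((LinearMap.range (T : X →ₗ[ℂ] Y) : Submodule ℂ Y) : Set Y) ∧
    Continuous ⇑(T : X →ₗ[ℂ] Y).quotKerEquivRange ∧
    IsOpenMap ⇑(T : X →ₗ[ℂ] Y).quotKerEquivRange := by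
  classical
  set R : Submodule ℂ Y := LinearMap.range (T : X →ₗ[ℂ] Y) with hRdef
  set R' : Submodule ℂ Z := Submodule.comap Z.subtype R with hR'def
  haveI : CompleteSpace Z := hZclosed.completeSpace_coe
  haveI : IsUniformAddGroup Z := Z.toAddSubgroup.isUniformAddGroup
  haveI : TopologicalSpace.MetrizableSpace Z :=
    Topology.IsEmbedding.subtypeVal.metrizableSpace
  obtain ⟨Ec, hcompl⟩ := Submodule.exists_isCompl R'
  haveI : FiniteDimensional ℂ (Z ⧸ R') := hfd
  haveI : FiniteDimensional ℂ Ec := (R'.quotientEquivOfIsCompl Ec hcompl).finiteDimensional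
  haveI : IsUniformAddGroup Ec := Ec.toAddSubgroup.isUniformAddGroup
  haveI : CompleteSpace Ec := FiniteDimensional.complete ℂ Ec
  haveI : TopologicalSpace.MetrizableSpace Ec :=
    Topology.IsEmbedding.subtypeVal.metrizableSpace
  -- the corestriction of `T` to `Z` and the auxiliary surjection `S`
  let T' : X →L[ℂ] Z := T.codRestrict Z (fun x => hTZ ⟨x, rfl⟩)
  let S : (X × Ec) →L[ℂ] Z :=
    T'.comp (ContinuousLinearMap.fst ℂ X Ec) + Ec.subtypeL.comp (ContinuousLinearMap.snd ℂ X Ec)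
  have hSapp : ∀ (x : X) (e : Ec), S (x, e) = T' x + (e : Z) := fun x e => rfl
  have hT'R' : ∀ x : X, T' x ∈ R' := fun x => by
    simp only [hR'def, Submodule.mem_comap]
    exact ⟨x, rfl⟩
  have hdisj : ∀ w : Z, w ∈ R' → w ∈ Ec → w = 0 := by
    intro w h1 h2
    have := hcompl.inf_eq_bot
    have hw : w ∈ R' ⊓ Ec := ⟨h1, h2⟩
    rw [this] at hw
    simpa using hw
  have hdecomp : ∀ z : Z, ∃ (x : X) (e : Ec), z = T' x + (e : Z) := by
    intro z
    have hz : z ∈ R' ⊔ Ec := by rw [hcompl.sup_eq_top]; trivial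
    obtain ⟨r, hr, e, he, hre⟩ := Submodule.mem_sup.1 hz
    obtain ⟨x, hx⟩ := hr
    refine ⟨x, ⟨e, he⟩, ?_⟩
    have hTx : T' x = r := Subtype.ext hx
    rw [hTx, hre]
  have hSsurj : Function.Surjective S := by
    intro z
    obtain ⟨x, e, hz⟩ := hdecomp z
    exact ⟨(x, e), by rw [hSapp, hz]⟩
  have hSopen : IsOpenMap S := omt_isOpenMap S hSsurj
  -- R' is closed
  have hcompl_eq : S '' (Set.univ ×ˢ ({0} : Set Ec)ᶜ) = (R' : Set Z)ᶜ := by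
    ext z
    constructor
    · rintro ⟨⟨x, e⟩, ⟨-, he⟩, rfl⟩ hz
      have heR' : (e : Z) ∈ R' := by
        have h0 : S (x, e) ∈ R' := hz
        have h1 := R'.sub_mem h0 (hT'R' x)
        have : S (x, e) - T' x = (e : Z) := by rw [hSapp]; abel
        rwa [this] at h1
      have : (e : Z) = 0 := hdisj _ heR' e.2
      exact he (by simpa using Subtype.ext this)
    · intro hz
      obtain ⟨x, e, hze⟩ := hdecomp z
      have he : e ≠ 0 := by
        rintro rfl
        apply hz
        have : z = T' x := by simpa using hze
        rw [this]; exact hT'R' x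
      exact ⟨(x, e), ⟨trivial, he⟩, by rw [hSapp, ← hze]⟩
  have hR'closed : IsClosed (R' : Set Z) := by
    rw [← compl_compl (R' : Set Z), ← hcompl_eq]
    exact (hSopen _ (isOpen_univ.prod isClosed_singleton.isOpen_compl)).isClosed_compl
  have hRset : (R : Set Y) = Subtype.val '' (R' : Set Z) := by
    ext y
    constructor
    · intro hy
      exact ⟨⟨y, hTZ hy⟩, hy, rfl⟩
    · rintro ⟨z, hz, rfl⟩
      exact hz
  have hRclosed : IsClosed (R : Set Y) := by
    rw [hRset]
    exact (hZclosed.isClosedEmbedding_subtypeVal).isClosedMap _ hR'closed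
  -- the corestriction t : X → R
  let t : X → R := fun x => ⟨T x, ⟨x, rfl⟩⟩
  have hQmk : ∀ x : X,
      (T : X →ₗ[ℂ] Y).quotKerEquivRange (Submodule.Quotient.mk x) = t x := by
    intro x
    apply Subtype.ext
    exact (T : X →ₗ[ℂ] Y).quotKerEquivRange_apply_mk x
  -- openness of t
  have hopenT : IsOpenMap t := by
    intro U hUopen
    have h1 : IsOpen (S '' (U ×ˢ (Set.univ : Set Ec))) := hSopen _ (hUopen.prod isOpen_univ)
    obtain ⟨V, hVopen, hVeq⟩ := isOpen_induced_iff.1 h1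
    refine isOpen_induced_iff.2 ⟨V, hVopen, ?_⟩
    ext r
    constructor
    · intro hr
      have hrZ : (⟨r.1, hTZ r.2⟩ : Z) ∈ S '' (U ×ˢ Set.univ) := by
        rw [← hVeq]; exact hr
      obtain ⟨⟨x, e⟩, ⟨hxU, -⟩, hSe⟩ := hrZ
      have hSR' : S (x, e) ∈ R' := by
        rw [hSe]
        show (r : Y) ∈ R
        exact r.2
      have heR' : (e : Z) ∈ R' := by
        have h1' := R'.sub_mem hSR' (hT'R' x)
        have : S (x, e) - T' x = (e : Z) := by rw [hSapp]; abel
        rwa [this] at h1'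
      have he0 : (e : Z) = 0 := hdisj _ heR' e.2
      have hval : T x = (r : Y) := by
        have := congrArg (Subtype.val) hSe
        rw [hSapp] at this
        simpa [he0, T'] using this
      exact ⟨x, hxU, Subtype.ext hval⟩
    · rintro ⟨x, hxU, rfl⟩
      show (t x : Y) ∈ V
      have : (⟨(t x : Y), hTZ (t x).2⟩ : Z) ∈ Subtype.val ⁻¹' V := by
        rw [hVeq]
        refine ⟨(x, 0), ⟨hxU, trivial⟩, ?_⟩
        rw [hSapp]
        apply Subtype.ext
        simp [T', t]
      exact this
  refine ⟨hRclosed, ?_, ?_⟩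
  · -- continuity
    have h1 : Continuous (fun x : X =>
        (T : X →ₗ[ℂ] Y).quotKerEquivRange (Submodule.Quotient.mk x)) := by
      have : (fun x : X => (T : X →ₗ[ℂ] Y).quotKerEquivRange (Submodule.Quotient.mk x)) = t :=
        funext hQmk
      rw [this]
      exact T.continuous.subtype_mk _
    exact ((LinearMap.ker (T : X →ₗ[ℂ] Y)).isOpenQuotientMap_mkQ).isQuotientMap.continuous_iff.2 h1
  · -- openness
    intro U hU
    have himg : ⇑(T : X →ₗ[ℂ] Y).quotKerEquivRange '' U
        = t '' ((LinearMap.ker (T : X →ₗ[ℂ] Y)).mkQ ⁻¹' U) := by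
      ext r
      constructor
      · rintro ⟨q, hq, rfl⟩
        obtain ⟨x, rfl⟩ := Submodule.Quotient.mk_surjective _ q
        exact ⟨x, hq, (hQmk x).symm⟩
      · rintro ⟨x, hx, rfl⟩
        exact ⟨Submodule.Quotient.mk x, hx, hQmk x⟩
    rw [himg]
    exact hopenT _ (hU.preimage
      ((LinearMap.ker (T : X →ₗ[ℂ] Y)).isOpenQuotientMap_mkQ).continuous)
end
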